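/- arXiv:quant-ph/0603011 — 3 statements merged into one kernel-verified Lean document; each statement's English description precedes it below -/
import Mathlib

section
/- Let M be a monoid and let S be a nonempty set of functions ω : M → ℝ such that 0 ≤ ω(A) ≤ 1 for every ω ∈ S and A ∈ M, and such that: (i) for every ω ∈ S and A, B ∈ M, if ω(A) = 0 then ω(B * A) = 0; (ii) for every ω ∈ S and A ∈ M with ω(A) > 0, the function B ↦ ω(B * A) / ω(A) again belongs to S. Define ‖A‖ := sup_{ω ∈ S} ω(A). Then for all A, B ∈ M one has ‖B * A‖ ≤ ‖B‖ · ‖A‖. -/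
/-- Submultiplicativity of the transformation norm `‖A‖ = sup_{ω ∈ S} ω A` for a set of
states `S` on a monoid of transformations, closed under conditioning. -/
theorem stmt_1 {M : Type*} [Monoid M] (S : Set (M → ℝ)) (hS : S.Nonempty)
    (hbd : ∀ ω ∈ S, ∀ A : M, 0 ≤ ω A ∧ ω A ≤ 1)
    (hzero : ∀ ω ∈ S, ∀ A B : M, ω A = 0 → ω (B * A) = 0)
    (hcond : ∀ ω ∈ S, ∀ A : M, 0 < ω A → (fun B : M => ω (B * A) / ω A) ∈ S) :
    ∀ A B : M,
      sSup ((fun ω : M → ℝ => ω (B * A)) '' S) ≤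
        sSup ((fun ω : M → ℝ => ω B) '' S) * sSup ((fun ω : M → ℝ => ω A) '' S) := by
  intro A B
  have hbdd : ∀ C : M, BddAbove ((fun ω : M → ℝ => ω C) '' S) := by
    intro C
    exact ⟨1, by rintro x ⟨ω, hω, rfl⟩; exact (hbd ω hω C).2⟩
  have hne : ∀ C : M, ((fun ω : M → ℝ => ω C) '' S).Nonempty := fun C => hS.image _
  have hnonneg : ∀ C : M, 0 ≤ sSup ((fun ω : M → ℝ => ω C) '' S) := by
    intro C
    obtain ⟨ω, hω⟩ := hS
    exact le_trans (hbd ω hω C).1 (le_csSup (hbdd C) ⟨ω, hω, rfl⟩)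
  apply csSup_le (hne _)
  rintro x ⟨ω, hω, rfl⟩
  simp only []
  show ω (B * A) ≤ _
  by_cases h : ω A = 0
  · rw [hzero ω hω A B h]
    exact mul_nonneg (hnonneg B) (hnonneg A)
  · have hpos : 0 < ω A := lt_of_le_of_ne (hbd ω hω A).1 (Ne.symm h)
    have hmem := hcond ω hω A hpos
    have h1 : ω (B * A) / ω A ≤ sSup ((fun ω : M → ℝ => ω B) '' S) :=
      le_csSup (hbdd B) ⟨_, hmem, rfl⟩
    have h2 : ω A ≤ sSup ((fun ω : M → ℝ => ω A) '' S) :=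
      le_csSup (hbdd A) ⟨ω, hω, rfl⟩
    calc ω (B * A) = (ω (B * A) / ω A) * ω A := by field_simp
    _ ≤ sSup ((fun ω : M → ℝ => ω B) '' S) * sSup ((fun ω : M → ℝ => ω A) '' S) :=
        mul_le_mul h1 h2 hpos.le (hnonneg B)
end

section
/- Let F be a symmetric positive definite real n × n matrix and let A be a real n × n matrix. If (F · Aᵀ · F⁻¹) · A = 0, then A = 0. -/
open Matrix

/-- For a symmetric positive definite `F`, the twin `A' = F Aᵀ F⁻¹` satisfies the fourth
axiom of a generalized adjoint: `A' A = 0` implies `A = 0`. -/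
theorem stmt_4 {n : ℕ} (F A : Matrix (Fin n) (Fin n) ℝ) (hF : F.PosDef)
    (h : (F * Aᵀ * F⁻¹) * A = 0) : A = 0 := by
  have hFi : (F⁻¹).PosDef := hF.inv
  have hinv : F⁻¹ * F = 1 := Matrix.nonsing_inv_mul F hF.det_pos.ne'.isUnit
  have h2 : Aᵀ * F⁻¹ * A = 0 := by
    have := congrArg (F⁻¹ * ·) h
    simpa [Matrix.mul_assoc, ← Matrix.mul_assoc F⁻¹ F, hinv] using this
  have hx : ∀ x : Fin n → ℝ, A *ᵥ x = 0 := by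
    intro x
    by_contra hne
    have h0 : (A *ᵥ x) ⬝ᵥ (F⁻¹ *ᵥ (A *ᵥ x)) = 0 := by
      have : x ⬝ᵥ ((Aᵀ * F⁻¹ * A) *ᵥ x) = 0 := by simp [h2]
      rw [← this, ← Matrix.mulVec_mulVec, ← Matrix.mulVec_mulVec,
        Matrix.dotProduct_mulVec x Aᵀ, Matrix.vecMul_transpose]
    have := hFi.dotProduct_mulVec_pos (x := A *ᵥ x) hne
    rw [show F⁻¹ *ᵥ (A *ᵥ x) = (F⁻¹ * A) *ᵥ x from (Matrix.mulVec_mulVec _ _ _)] at h0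
    simp [h0] at this
  ext i j
  have := congrFun (hx (Pi.single j 1)) i
  simpa [Matrix.mulVec_single] using this
end

section
/- Let E be a real Banach space and suppose there exists a map adj : (E →L[ℝ] E) → (E →L[ℝ] E) on the ring of continuous linear endomorphisms of E satisfying, for all continuous linear maps S, T : E → E: (1) adj(S + T) = adj S + adj T; (2) adj(adj T) = T; (3) adj(S ∘ T) = adj T ∘ adj S; and (4) (adj T) ∘ T = 0 implies T = 0. Then there exists a symmetric bilinear form ⟪·,·⟫ : E × E → ℝ which is positive definite, such that the norm x ↦ √⟪x,x⟫ is equivalent to the given norm of E (i.e. there exist constants c, C > 0 with c·‖x‖ ≤ √⟪x,x⟫ ≤ C·‖x‖ for all x), and such that ⟪T x, y⟫ = ⟪x, adj T y⟫ for all T : E →L[ℝ] E and all x, y ∈ E. -/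
set_option synthInstance.maxHeartbeats 1000000
set_option maxHeartbeats 1000000

namespace MK1944

variable {E : Type*} [NormedAddCommGroup E] [NormedSpace ℝ E]

/-- A generalized adjoint on the ring of continuous endomorphisms. -/
structure GA (E : Type*) [NormedAddCommGroup E] [NormedSpace ℝ E] where
  adj : (E →L[ℝ] E) → (E →L[ℝ] E)
  map_add : ∀ S T, adj (S + T) = adj S + adj T
  invo : ∀ T, adj (adj T) = T
  map_mul : ∀ S T, adj (S * T) = adj T * adj S
  null : ∀ T, adj T * T = 0 → T = 0

namespace GA

variable (g : GA E)

theorem adj_zero : g.adj 0 = 0 := by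
  have := g.map_add 0 0
  simpa using this.symm

theorem adj_neg (T : E →L[ℝ] E) : g.adj (-T) = -g.adj T := by
  have h := g.map_add T (-T)
  simp only [add_neg_cancel, g.adj_zero] at h
  linear_combination (norm := module) -h

theorem adj_one : g.adj 1 = 1 := by
  set J := g.adj 1 with hJ
  have hJJ : J = J * J := by
    have := g.map_mul 1 1
    simpa using this
  set T : E →L[ℝ] E := 1 - J with hT
  have hadjT : g.adj T = -T := by
    have h := g.map_add J T
    rw [show J + T = 1 from by rw [hT]; abel] at h
    have h2 : g.adj J = 1 := by rw [hJ, g.invo]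
    rw [← hJ, h2] at h
    -- J = 1 + adj T
    have : g.adj T = J - 1 := by linear_combination (norm := module) -h
    rw [this, hT]; abel
  have hTT : T * T = T := by
    rw [hT]; rw [mul_sub, sub_mul, sub_mul, one_mul, mul_one, ← hJJ]; abel
  -- A := adj T * T = -T, and adj A = A; also adj (-T) = T, contradiction unless T=0
  have hA : g.adj T * T = -T := by rw [hadjT, neg_mul, hTT]
  have hadjA : g.adj (g.adj T * T) = g.adj T * T := by
    rw [g.map_mul, g.invo]
  rw [hA, g.adj_neg, hadjT] at hadjA
  -- hadjA : -(-T) = -T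
  have hT0 : T = 0 := by
    have : (2 : ℝ) • T = 0 := by
      rw [two_smul]
      linear_combination (norm := module) hadjA
    have h2 : ((2:ℝ))⁻¹ • ((2:ℝ) • T) = ((2:ℝ))⁻¹ • (0 : E →L[ℝ] E) := by rw [this]
    rwa [smul_smul, inv_mul_cancel₀ (by norm_num), one_smul, smul_zero] at h2
  have : J = 1 := by
    have := hT0
    rw [hT] at this
    linear_combination (norm := module) -this
  rw [hJ] at this; exact this

theorem eq_smul_one_of_central [Nontrivial E] (T : E →L[ℝ] E)
    (h : ∀ S : E →L[ℝ] E, T * S = S * T) : ∃ c : ℝ, T = c • 1 := by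
  obtain ⟨x0, hx0⟩ := exists_ne (0 : E)
  obtain ⟨f, -, hfx0'⟩ := exists_dual_vector ℝ x0 (norm_ne_zero_iff.2 hx0)
  have hfx0 : f x0 = ‖x0‖ := by exact_mod_cast hfx0'
  set e : E := ‖x0‖⁻¹ • x0 with he
  have hfe : f e = 1 := by
    rw [he, map_smul, hfx0, smul_eq_mul, inv_mul_cancel₀ (norm_ne_zero_iff.2 hx0)]
  refine ⟨f (T e), ?_⟩
  ext x
  have hc := congrArg (fun S => S e) (h (f.smulRight x))
  simp only [ContinuousLinearMap.mul_apply, ContinuousLinearMap.smulRight_apply, hfe,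
    one_smul, map_smul] at hc
  simpa [ContinuousLinearMap.smul_apply] using hc

theorem smul_one_uniq [Nontrivial E] {a b : ℝ} (h : a • (1 : E →L[ℝ] E) = b • 1) : a = b := by
  obtain ⟨x0, hx0⟩ := exists_ne (0 : E)
  have := congrArg (fun S : E →L[ℝ] E => S x0) h
  simp only [ContinuousLinearMap.smul_apply, ContinuousLinearMap.one_apply] at this
  have hsub : (a - b) • x0 = 0 := by rw [sub_smul, this, sub_self]
  rcases smul_eq_zero.1 hsub with h' | h'
  · linarith [h']
  · exact absurd h' hx0

theorem adj_central (c : ℝ) (S : E →L[ℝ] E) :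
    g.adj (c • 1) * S = S * g.adj (c • 1) := by
  conv_lhs => rw [← g.invo S]
  conv_rhs => rw [← g.invo S]
  rw [← g.map_mul, ← g.map_mul]
  congr 1
  rw [smul_mul_assoc, mul_smul_comm, one_mul, mul_one]

theorem adj_smul_one [Nontrivial E] (c : ℝ) : g.adj (c • 1) = c • 1 := by
  classical
  have hex : ∀ c : ℝ, ∃ a : ℝ, g.adj (c • 1) = a • 1 :=
    fun c => eq_smul_one_of_central _ (g.adj_central c)
  set lam : ℝ → ℝ := fun c => Classical.choose (hex c) with hlam
  have hspec : ∀ c : ℝ, g.adj (c • 1) = lam c • 1 := fun c => Classical.choose_spec (hex c)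
  have key : ∀ c d : ℝ, g.adj ((c * d) • 1) = (lam c * lam d) • (1 : E →L[ℝ] E) := by
    intro c d
    have : (c * d) • (1 : E →L[ℝ] E) = (c • 1) * (d • 1) := by
      rw [smul_mul_assoc, mul_smul_comm, mul_one, smul_smul]
    rw [this, g.map_mul, hspec c, hspec d, smul_mul_assoc, mul_smul_comm, mul_one,
      smul_smul, mul_comm]
  have hone : lam 1 = 1 := by
    apply smul_one_uniq (E := E)
    rw [← hspec 1, one_smul, g.adj_one]
  have hmul : ∀ c d, lam (c * d) = lam c * lam d := by
    intro c d
    apply smul_one_uniq (E := E)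
    rw [← hspec (c * d), key]
  have hadd : ∀ c d, lam (c + d) = lam c + lam d := by
    intro c d
    apply smul_one_uniq (E := E)
    have h' : ((c + d) : ℝ) • (1 : E →L[ℝ] E) = c • 1 + d • 1 := add_smul c d 1
    rw [← hspec (c + d), h', g.map_add, hspec c, hspec d, add_smul]
  have hzero : lam 0 = 0 := by
    apply smul_one_uniq (E := E)
    rw [← hspec 0, zero_smul, g.adj_zero]
  set phi : ℝ →+* ℝ :=
    { toFun := lam, map_one' := hone, map_mul' := hmul, map_zero' := hzero,
      map_add' := hadd } with hphi
  have : phi = RingHom.id ℝ := Subsingleton.elim _ _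
  have hlc : lam c = c := by
    have := congrArg (fun ψ : ℝ →+* ℝ => ψ c) this
    exact this
  rw [hspec c, hlc]

theorem adj_smul [Nontrivial E] (c : ℝ) (T : E →L[ℝ] E) :
    g.adj (c • T) = c • g.adj T := by
  have : c • T = (c • 1) * T := by rw [smul_mul_assoc, one_mul]
  rw [this, g.map_mul, g.adj_smul_one, mul_smul_comm, mul_one]

/-- The rank one operator `z ↦ f z • x`. -/
noncomputable def rk (f : E →L[ℝ] ℝ) (x : E) : E →L[ℝ] E := f.smulRight x

theorem rk_apply (f : E →L[ℝ] ℝ) (x z : E) : rk f x z = f z • x := rfl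

theorem rk_e {f : E →L[ℝ] ℝ} {e : E} (hfe : f e = 1) (x : E) : rk f x e = x := by
  rw [rk_apply, hfe, one_smul]

theorem rk_map (f : E →L[ℝ] ℝ) (T : E →L[ℝ] E) (x : E) :
    rk f (T x) = T * rk f x := by
  ext z
  simp [rk_apply, ContinuousLinearMap.mul_apply]

theorem rk_add (f : E →L[ℝ] ℝ) (x y : E) : rk f (x + y) = rk f x + rk f y := by
  ext z; simp [rk_apply, smul_add]

theorem rk_smul (f : E →L[ℝ] ℝ) (c : ℝ) (x : E) : rk f (c • x) = c • rk f x := by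
  ext z
  rw [rk_apply, ContinuousLinearMap.smul_apply, rk_apply, smul_comm]

theorem nontrivial_of_f {f : E →L[ℝ] ℝ} {e : E} (hfe : f e = 1) : Nontrivial E := by
  refine ⟨e, 0, fun h => ?_⟩
  rw [h] at hfe; simp at hfe

/-- The candidate bilinear form. -/
noncomputable def B0 (g : GA E) (f : E →L[ℝ] ℝ) (x y : E) : ℝ := f (g.adj (rk f x) y)

theorem B0_adjoint (g : GA E) (f : E →L[ℝ] ℝ) (T : E →L[ℝ] E) (x y : E) :
    B0 g f (T x) y = B0 g f x (g.adj T y) := by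
  unfold B0
  rw [rk_map, g.map_mul, ContinuousLinearMap.mul_apply]

theorem B0_adjoint' (g : GA E) (f : E →L[ℝ] ℝ) (T : E →L[ℝ] E) (x y : E) :
    B0 g f x (T y) = B0 g f (g.adj T x) y := by
  conv_lhs => rw [← g.invo T]
  rw [← B0_adjoint]

theorem Q_eq_zero (g : GA E) {f : E →L[ℝ] ℝ} {e : E} (hfe : f e = 1) {x z : E}
    (h : B0 g f x z = 0) : g.adj (rk f x) z = 0 := by
  set v : E := g.adj (rk f x) z with hv
  have hfv : f v = 0 := h
  -- T := adj (rk f x) * rk f z  equals  rk f v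
  have hT : g.adj (rk f x) * rk f z = rk f v := by
    ext w
    simp only [ContinuousLinearMap.mul_apply, rk_apply, map_smul, hv]
  -- rk f x * rk f v = 0 since f v = 0
  have hxv : rk f x * rk f v = 0 := by
    ext w
    simp [ContinuousLinearMap.mul_apply, rk_apply, hfv]
  have hzero : g.adj (g.adj (rk f x) * rk f z) * (g.adj (rk f x) * rk f z) = 0 := by
    rw [g.map_mul, g.invo, hT]
    calc g.adj (rk f z) * rk f x * rk f v = g.adj (rk f z) * (rk f x * rk f v) := by
          rw [mul_assoc]
      _ = 0 := by rw [hxv, mul_zero]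
  have := g.null _ hzero
  rw [hT] at this
  have hv0 : v = 0 := by
    have h' := congrArg (fun S : E →L[ℝ] E => S e) this
    simpa [rk_apply, hfe] using h'
  exact hv0

theorem B0_definite (g : GA E) {f : E →L[ℝ] ℝ} {e : E} (hfe : f e = 1) {x : E}
    (h : B0 g f x x = 0) : x = 0 := by
  have hQ : g.adj (rk f x) x = 0 := Q_eq_zero g hfe h
  have hzero : g.adj (rk f x) * rk f x = 0 := by
    ext w
    simp [ContinuousLinearMap.mul_apply, rk_apply, map_smul, hQ]
  have := g.null _ hzero
  have h' := congrArg (fun S : E →L[ℝ] E => S e) this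
  simpa [rk_apply, hfe] using h'

theorem B0_e_ne (g : GA E) {f : E →L[ℝ] ℝ} {e : E} (hfe : f e = 1) :
    B0 g f e e ≠ 0 := by
  intro h
  have := B0_definite g hfe h
  rw [this] at hfe
  simp at hfe

theorem B0_symm_e (g : GA E) {f : E →L[ℝ] ℝ} {e : E} (hfe : f e = 1) (x : E) :
    B0 g f e x = B0 g f x e := by
  -- A := rk f e * adj (rk f e) is self-adjoint ; A z = B0 e z • e
  set A : E →L[ℝ] E := rk f e * g.adj (rk f e) with hA
  have hAapp : ∀ z, A z = B0 g f e z • e := by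
    intro z
    simp [hA, ContinuousLinearMap.mul_apply, rk_apply, B0]
  have hAadj : g.adj A = A := by
    rw [hA, g.map_mul, g.invo]
  have key : ∀ a b : E, B0 g f e a * B0 g f e b = B0 g f e b * B0 g f a e := by
    intro a b
    have h1 : B0 g f (A a) b = B0 g f a (A b) := by
      rw [B0_adjoint, hAadj]
    rw [hAapp a, hAapp b] at h1
    haveI : Nontrivial E := nontrivial_of_f hfe
    have h2 : B0 g f (B0 g f e a • e) b = B0 g f e a * B0 g f e b := by
      unfold B0
      rw [rk_smul, g.adj_smul]
      simp [ContinuousLinearMap.smul_apply, smul_eq_mul]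
    have h3 : B0 g f a (B0 g f e b • e) = B0 g f e b * B0 g f a e := by
      unfold B0
      simp [map_smul, smul_eq_mul]
    rw [h2, h3] at h1
    exact h1
  have hkey := key x e
  have hee := B0_e_ne g hfe
  rw [mul_comm (B0 g f e x) (B0 g f e e)] at hkey
  exact mul_left_cancel₀ hee hkey

theorem B0_symm (g : GA E) {f : E →L[ℝ] ℝ} {e : E} (hfe : f e = 1) (x y : E) :
    B0 g f x y = B0 g f y x := by
  have h1 : B0 g f x y = B0 g f e (g.adj (rk f x) y) := by
    conv_lhs => rw [← rk_e hfe x, B0_adjoint]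
  have h2 : B0 g f e (g.adj (rk f x) y) = B0 g f (g.adj (rk f x) y) e :=
    B0_symm_e g hfe _
  have h3 : B0 g f (g.adj (rk f x) y) e = B0 g f y x := by
    rw [B0_adjoint, g.invo, rk_e hfe]
  rw [h1, h2, h3]

theorem B0_add_left (g : GA E) (f : E →L[ℝ] ℝ) (x x' y : E) :
    B0 g f (x + x') y = B0 g f x y + B0 g f x' y := by
  unfold B0
  rw [rk_add, g.map_add]
  simp [ContinuousLinearMap.add_apply]

theorem B0_smul_left (g : GA E) [Nontrivial E] (f : E →L[ℝ] ℝ) (c : ℝ) (x y : E) :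
    B0 g f (c • x) y = c * B0 g f x y := by
  unfold B0
  rw [rk_smul, g.adj_smul]
  simp [ContinuousLinearMap.smul_apply, smul_eq_mul]

theorem B0_add_right (g : GA E) (f : E →L[ℝ] ℝ) (x y y' : E) :
    B0 g f x (y + y') = B0 g f x y + B0 g f x y' := by
  simp [B0, map_add]

theorem B0_smul_right (g : GA E) (f : E →L[ℝ] ℝ) (c : ℝ) (x y : E) :
    B0 g f x (c • y) = c * B0 g f x y := by
  simp [B0, map_smul, smul_eq_mul]

theorem B0_expand (g : GA E) {f : E →L[ℝ] ℝ} {e : E} (hfe : f e = 1) (x y : E) (t : ℝ) :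
    B0 g f (x + t • y) (x + t • y)
      = B0 g f x x + 2 * t * B0 g f x y + t ^ 2 * B0 g f y y := by
  haveI : Nontrivial E := nontrivial_of_f hfe
  simp only [B0_add_left, B0_add_right, B0_smul_left, B0_smul_right]
  rw [B0_symm g hfe y x]
  ring

theorem B0_same_sign (g : GA E) {f : E →L[ℝ] ℝ} {e : E} (hfe : f e = 1) {x y : E}
    (hx : x ≠ 0) (hy : y ≠ 0) (hqx : 0 < B0 g f x x) : 0 < B0 g f y y := by
  by_contra hqy'
  have hqyne : B0 g f y y ≠ 0 := fun h => hy (B0_definite g hfe h)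
  have hqy : B0 g f y y < 0 := lt_of_le_of_ne (not_lt.1 hqy') hqyne
  set qx := B0 g f x x with hqxdef
  set qy := B0 g f y y with hqydef
  set b := B0 g f x y with hbdef
  set m : ℝ := -qy with hm
  have hmpos : 0 < m := by rw [hm]; linarith
  set t0 : ℝ := max 1 ((qx + 2 * |b| + 1) / m) with ht0
  have ht01 : 1 ≤ t0 := le_max_left _ _
  have ht0m : qx + 2 * |b| + 1 ≤ t0 * m := by
    rw [← div_le_iff₀ hmpos]
    exact le_max_right _ _
  have ht0pos : 0 < t0 := lt_of_lt_of_le one_pos ht01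
  set gfun : ℝ → ℝ := fun t => qx + 2 * t * b + t ^ 2 * qy with hgfun
  have hgcont : Continuous gfun := by
    rw [hgfun]; continuity
  have hg0 : 0 < gfun 0 := by simp [hgfun]; linarith
  have hgt0 : gfun t0 < 0 := by
    have habs1 : b ≤ |b| := le_abs_self b
    have habs2 : -b ≤ |b| := neg_le_abs b
    have h5 : t0 * (qx + 2 * |b| + 1) ≤ t0 * (t0 * m) :=
      mul_le_mul_of_nonneg_left ht0m (le_of_lt ht0pos)
    have h6 : qx + 2 * t0 * |b| + 1 ≤ t0 * (qx + 2 * |b| + 1) := by nlinarith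
    have h7 : t0 ^ 2 * qy = -(t0 * (t0 * m)) := by rw [hm]; ring
    simp only [hgfun]
    nlinarith
  obtain ⟨t1, ht1mem, ht1⟩ : ∃ t1 ∈ Set.Icc 0 t0, gfun t1 = 0 := by
    have := intermediate_value_Icc' (le_of_lt ht0pos) hgcont.continuousOn
    have h0mem : (0 : ℝ) ∈ Set.Icc (gfun t0) (gfun 0) := ⟨le_of_lt hgt0, le_of_lt hg0⟩
    obtain ⟨t1, h1, h2⟩ := this h0mem
    exact ⟨t1, h1, h2⟩
  have hzz : B0 g f (x + t1 • y) (x + t1 • y) = 0 := by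
    rw [B0_expand g hfe]
    rw [hgfun] at ht1
    exact ht1
  have hz0 : x + t1 • y = 0 := B0_definite g hfe hzz
  have hxy : x = -t1 • y := by
    rw [neg_smul]
    linear_combination (norm := module) hz0
  haveI : Nontrivial E := nontrivial_of_f hfe
  have : qx = t1 ^ 2 * qy := by
    rw [hqxdef, hqydef, hxy, B0_smul_left, B0_smul_right]
    ring
  nlinarith [sq_nonneg t1]

end GA

end MK1944

open MK1944 MK1944.GA

/-- Mackey–Kakutani: a real Banach space whose ring of continuous linear endomorphisms
admits a generalized adjoint carries a positive definite symmetric bilinear form inducing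
an equivalent norm and realizing the generalized adjoint as the adjoint. -/
theorem stmt_10 {E : Type*} [NormedAddCommGroup E] [NormedSpace ℝ E] [CompleteSpace E]
    (adj : (E →L[ℝ] E) → (E →L[ℝ] E))
    (h1 : ∀ S T : E →L[ℝ] E, adj (S + T) = adj S + adj T)
    (h2 : ∀ T : E →L[ℝ] E, adj (adj T) = T)
    (h3 : ∀ S T : E →L[ℝ] E, adj (S.comp T) = (adj T).comp (adj S))
    (h4 : ∀ T : E →L[ℝ] E, (adj T).comp T = 0 → T = 0) :
    ∃ B : E →ₗ[ℝ] E →ₗ[ℝ] ℝ,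
      (∀ x y : E, B x y = B y x) ∧
      (∀ x : E, x ≠ 0 → 0 < B x x) ∧
      (∃ c C : ℝ, 0 < c ∧ 0 < C ∧
        ∀ x : E, c * ‖x‖ ≤ Real.sqrt (B x x) ∧ Real.sqrt (B x x) ≤ C * ‖x‖) ∧
      (∀ (T : E →L[ℝ] E) (x y : E), B (T x) y = B x (adj T y)) := by
  rcases subsingleton_or_nontrivial E with hE | hE
  · refine ⟨0, by simp, ?_, ⟨1, 1, one_pos, one_pos, ?_⟩, by simp⟩
    · intro x hx; exact absurd (Subsingleton.elim x 0) hx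
    · intro x
      have hx : x = (0 : E) := Subsingleton.elim x 0
      subst hx
      simp
  · obtain ⟨x0, hx0⟩ := exists_ne (0 : E)
    obtain ⟨f0, -, hfx0'⟩ := exists_dual_vector ℝ x0 (norm_ne_zero_iff.2 hx0)
    have hfx0 : f0 x0 = ‖x0‖ := by exact_mod_cast hfx0'
    set e : E := ‖x0‖⁻¹ • x0 with he
    have hfe : f0 e = 1 := by
      rw [he, map_smul, hfx0, smul_eq_mul, inv_mul_cancel₀ (norm_ne_zero_iff.2 hx0)]
    have hene : e ≠ 0 := fun h => by rw [h] at hfe; simp at hfe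
    set g : GA E :=
      { adj := adj, map_add := h1, invo := h2,
        map_mul := fun S T => by
          rw [ContinuousLinearMap.mul_def, ContinuousLinearMap.mul_def]
          exact h3 S T,
        null := fun T h => h4 T (by rwa [ContinuousLinearMap.mul_def] at h) } with hg
    have hgadj : g.adj = adj := rfl
    haveI : Nontrivial E := nontrivial_of_f hfe
    -- the sign dichotomy
    have hdich : (∀ x : E, x ≠ 0 → 0 < B0 g f0 x x) ∨ (∀ x : E, x ≠ 0 → B0 g f0 x x < 0) := by
      rcases lt_trichotomy (B0 g f0 e e) 0 with h | h | h
      · right; intro x hx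
        by_contra hx'
        have hne : B0 g f0 x x ≠ 0 := fun hh => hx (B0_definite g hfe hh)
        have hxx : 0 < B0 g f0 x x := lt_of_le_of_ne (not_lt.1 hx') (Ne.symm hne)
        have := B0_same_sign g hfe hx hene hxx
        linarith
      · exact absurd h (B0_e_ne g hfe)
      · left; intro x hx; exact B0_same_sign g hfe hene hx h
    set ε : ℝ := if 0 < B0 g f0 e e then 1 else -1 with hε
    have hεabs : |ε| = 1 := by rw [hε]; split <;> norm_num
    set Bb : E →ₗ[ℝ] E →ₗ[ℝ] ℝ :=
      LinearMap.mk₂ ℝ (B0 g f0) (B0_add_left g f0)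
        (fun c m n => by rw [B0_smul_left g f0, smul_eq_mul])
        (B0_add_right g f0)
        (fun c m n => by rw [B0_smul_right g f0, smul_eq_mul]) with hBb
    set B : E →ₗ[ℝ] E →ₗ[ℝ] ℝ := ε • Bb with hB
    have hBapp : ∀ x y, B x y = ε * B0 g f0 x y := fun x y => by
      rw [hB]
      simp [LinearMap.smul_apply, smul_eq_mul, hBb]
    have hpos : ∀ x : E, x ≠ 0 → 0 < B x x := by
      intro x hx
      rcases hdich with hp | hn
      · have h0 : 0 < B0 g f0 e e := hp e hene
        rw [hBapp, hε, if_pos h0, one_mul]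
        exact hp x hx
      · have h0 : ¬ 0 < B0 g f0 e e := by have := hn e hene; linarith
        rw [hBapp, hε, if_neg h0, neg_one_mul]
        have := hn x hx; linarith
    have hsymmB : ∀ x y, B x y = B y x := fun x y => by
      rw [hBapp, hBapp, B0_symm g hfe x y]
    have hadjB : ∀ (T : E →L[ℝ] E) (x y : E), B (T x) y = B x (g.adj T y) := fun T x y => by
      rw [hBapp, hBapp, B0_adjoint]
    have hBdef : ∀ x, B x x = 0 → x = 0 := by
      intro x hx
      rw [hBapp] at hx
      have hεne : ε ≠ 0 := by rw [hε]; split <;> norm_num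
      exact B0_definite g hfe ((mul_eq_zero.1 hx).resolve_left hεne)
    have hBnonneg : ∀ x, 0 ≤ B x x := by
      intro x
      rcases eq_or_ne x 0 with h | h
      · subst h; simp
      · exact le_of_lt (hpos x h)
    have hBexp : ∀ (x y : E) (t : ℝ), B (x + t • y) (x + t • y)
        = B x x + 2 * t * B x y + t ^ 2 * B y y := by
      intro x y t
      rw [hBapp, hBapp, hBapp, hBapp, B0_expand g hfe]
      ring
    -- Cauchy–Schwarz
    have hCS : ∀ x y, (B x y) ^ 2 ≤ B x x * B y y := by
      intro x y
      rcases eq_or_ne y 0 with h | h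
      · subst h; simp
      · have hqy : 0 < B y y := hpos y h
        have hyne : B y y ≠ 0 := ne_of_gt hqy
        have hnn := hBnonneg (x + (-(B x y) / B y y) • y)
        rw [hBexp x y (-(B x y) / B y y)] at hnn
        have heq : B x x + 2 * (-(B x y) / B y y) * B x y
            + (-(B x y) / B y y) ^ 2 * B y y = B x x - (B x y) ^ 2 / B y y := by
          field_simp
          ring
        rw [heq] at hnn
        have hd : (B x y) ^ 2 / B y y ≤ B x x := by linarith
        have := (div_le_iff₀ hqy).1 hd
        linarith
    -- joint continuity via Banach–Steinhaus
    have hBS : ∃ C : ℝ, 1 ≤ C ∧ ∀ x y : E, |B x y| ≤ C * ‖x‖ * ‖y‖ := by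
      set fam : {y : E // ‖y‖ ≤ 1} → (E →L[ℝ] ℝ) :=
        fun i => f0.comp (g.adj (rk f0 i.1)) with hfam
      have hfamapp : ∀ (i) (x : E), fam i x = B0 g f0 i.1 x := fun i x => rfl
      have hpt : ∀ x : E, ∃ C, ∀ i, ‖fam i x‖ ≤ C := by
        intro x
        refine ⟨‖f0.comp (g.adj (rk f0 x))‖, fun i => ?_⟩
        have hx1 : fam i x = (f0.comp (g.adj (rk f0 x))) i.1 := by
          rw [hfamapp]
          exact B0_symm g hfe _ _
        rw [hx1]
        calc ‖(f0.comp (g.adj (rk f0 x))) i.1‖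
            ≤ ‖f0.comp (g.adj (rk f0 x))‖ * ‖i.1‖ := ContinuousLinearMap.le_opNorm _ _
          _ ≤ ‖f0.comp (g.adj (rk f0 x))‖ * 1 :=
              mul_le_mul_of_nonneg_left i.2 (norm_nonneg _)
          _ = _ := mul_one _
      obtain ⟨C0, hC0⟩ := banach_steinhaus hpt
      have hC0nonneg : 0 ≤ C0 := le_trans (norm_nonneg _) (hC0 ⟨0, by simp⟩)
      refine ⟨max C0 1, le_max_right _ _, fun x y => ?_⟩
      have habsB : |B x y| = |B0 g f0 x y| := by
        rw [hBapp, abs_mul, hεabs, one_mul]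
      rw [habsB]
      rcases eq_or_ne x 0 with hx | hx
      · subst hx
        have : B0 g f0 0 y = 0 := by
          have := B0_add_left g f0 0 0 y
          simpa using this
        rw [this]
        simp
      · set u : E := ‖x‖⁻¹ • x with hu
        have hnu : ‖u‖ ≤ 1 := by
          rw [hu, norm_smul, norm_inv, norm_norm,
            inv_mul_cancel₀ (norm_ne_zero_iff.2 hx)]
        have hxu : x = ‖x‖ • u := by
          rw [hu, smul_smul, mul_inv_cancel₀ (norm_ne_zero_iff.2 hx), one_smul]
        have hsplit : B0 g f0 x y = ‖x‖ * B0 g f0 u y := by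
          conv_lhs => rw [hxu]
          rw [B0_smul_left]
        have hbound : |B0 g f0 u y| ≤ C0 * ‖y‖ := by
          have h5 : B0 g f0 u y = fam ⟨u, hnu⟩ y := rfl
          rw [h5, ← Real.norm_eq_abs]
          calc ‖fam ⟨u, hnu⟩ y‖ ≤ ‖fam ⟨u, hnu⟩‖ * ‖y‖ := ContinuousLinearMap.le_opNorm _ _
            _ ≤ C0 * ‖y‖ := mul_le_mul_of_nonneg_right (hC0 _) (norm_nonneg _)
        rw [hsplit, abs_mul, abs_norm]
        calc ‖x‖ * |B0 g f0 u y| ≤ ‖x‖ * (C0 * ‖y‖) :=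
            mul_le_mul_of_nonneg_left hbound (norm_nonneg _)
          _ = C0 * ‖x‖ * ‖y‖ := by ring
          _ ≤ max C0 1 * ‖x‖ * ‖y‖ := by
            gcongr
            exact le_max_left _ _
    obtain ⟨C1, hC11, hC1⟩ := hBS
    have hC1pos : (0:ℝ) < C1 := lt_of_lt_of_le one_pos hC11
    -- the continuous linear map Φ : x ↦ B x ·
    set Φ₀ : E →ₗ[ℝ] (E →L[ℝ] ℝ) :=
      { toFun := fun x => ε • (f0.comp (g.adj (rk f0 x))),
        map_add' := fun x y => by
          show ε • (f0.comp (g.adj (rk f0 (x + y))))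
              = ε • (f0.comp (g.adj (rk f0 x))) + ε • (f0.comp (g.adj (rk f0 y)))
          rw [rk_add, g.map_add, ContinuousLinearMap.comp_add, smul_add],
        map_smul' := fun c x => by
          show ε • (f0.comp (g.adj (rk f0 (c • x))))
              = (RingHom.id ℝ) c • (ε • (f0.comp (g.adj (rk f0 x))))
          rw [rk_smul, g.adj_smul, ContinuousLinearMap.comp_smul]
          simp only [RingHom.id_apply]
          rw [smul_comm] } with hΦ₀
    have hΦ₀app : ∀ x y, Φ₀ x y = B x y := by
      intro x y
      rw [hBapp]
      simp [hΦ₀, B0, smul_eq_mul]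
    set Φ : E →L[ℝ] (E →L[ℝ] ℝ) := Φ₀.mkContinuous C1 (by
      intro x
      apply ContinuousLinearMap.opNorm_le_bound _ (by positivity)
      intro y
      rw [Real.norm_eq_abs, hΦ₀app]
      calc |B x y| ≤ C1 * ‖x‖ * ‖y‖ := hC1 x y
        _ = C1 * ‖x‖ * ‖y‖ := rfl) with hΦ
    have hΦapp : ∀ x y, Φ x y = B x y := fun x y => by
      rw [hΦ]
      rw [LinearMap.mkContinuous_apply]
      exact hΦ₀app x y
    -- injective and surjective
    have hinj : Φ.ker = ⊥ := by
      rw [LinearMap.ker_eq_bot']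
      intro x hx
      change Φ x = 0 at hx
      apply hBdef
      rw [← hΦapp]
      rw [hx]
      rfl
    have hBee : B e e ≠ 0 := ne_of_gt (hpos e hene)
    have hsurj : Φ.range = ⊤ := by
      rw [LinearMap.range_eq_top]
      intro gg
      refine ⟨(B e e)⁻¹ • (g.adj (rk gg e) e), ?_⟩
      ext z
      change (Φ _) z = gg z
      rw [hΦapp]
      have hs : B ((B e e)⁻¹ • (g.adj (rk gg e) e)) z
          = (B e e)⁻¹ * B (g.adj (rk gg e) e) z := by
        rw [map_smul]
        rfl
      rw [hs]
      have hmid : B (g.adj (rk gg e) e) z = B e (rk gg e z) := by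
        have := hadjB (g.adj (rk gg e)) e z
        rw [g.invo] at this
        exact this
      have hsm : (B e) ((gg z) • e) = gg z * (B e) e := by
        rw [map_smul, smul_eq_mul]
      rw [hmid, rk_apply, hsm, mul_comm (gg z), ← mul_assoc, inv_mul_cancel₀ hBee, one_mul]
    set equiv := ContinuousLinearEquiv.ofBijective Φ hinj hsurj with hequiv
    set M : ℝ := ‖(equiv.symm : (E →L[ℝ] ℝ) →L[ℝ] E)‖ with hM
    have hMnonneg : 0 ≤ M := norm_nonneg _
    have hlow : ∀ x : E, ‖x‖ ≤ M * ‖Φ x‖ := by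
      intro x
      have hx : x = equiv.symm (Φ x) := by
        rw [hequiv]
        exact (ContinuousLinearEquiv.ofBijective_symm_apply_apply Φ hinj hsurj x).symm
      conv_lhs => rw [hx]
      calc ‖equiv.symm (Φ x)‖ = ‖(equiv.symm : (E →L[ℝ] ℝ) →L[ℝ] E) (Φ x)‖ := rfl
        _ ≤ M * ‖Φ x‖ := ContinuousLinearMap.le_opNorm _ _
    have hup : ∀ y : E, Real.sqrt (B y y) ≤ Real.sqrt C1 * ‖y‖ := by
      intro y
      have hb : B y y ≤ C1 * (‖y‖ * ‖y‖) := by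
        calc B y y ≤ |B y y| := le_abs_self _
          _ ≤ C1 * ‖y‖ * ‖y‖ := hC1 y y
          _ = C1 * (‖y‖ * ‖y‖) := by ring
      calc Real.sqrt (B y y) ≤ Real.sqrt (C1 * (‖y‖ * ‖y‖)) := Real.sqrt_le_sqrt hb
        _ = Real.sqrt C1 * Real.sqrt (‖y‖ * ‖y‖) := Real.sqrt_mul (le_of_lt hC1pos) _
        _ = Real.sqrt C1 * ‖y‖ := by rw [Real.sqrt_mul_self (norm_nonneg _)]
    have habsCS : ∀ x y, |B x y| ≤ Real.sqrt (B x x) * Real.sqrt (B y y) := by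
      intro x y
      calc |B x y| = Real.sqrt ((B x y) ^ 2) := (Real.sqrt_sq_eq_abs _).symm
        _ ≤ Real.sqrt (B x x * B y y) := Real.sqrt_le_sqrt (hCS x y)
        _ = Real.sqrt (B x x) * Real.sqrt (B y y) := Real.sqrt_mul (hBnonneg x) _
    have hΦnorm : ∀ x : E, ‖Φ x‖ ≤ Real.sqrt C1 * Real.sqrt (B x x) := by
      intro x
      apply ContinuousLinearMap.opNorm_le_bound _ (by positivity)
      intro y
      rw [Real.norm_eq_abs, hΦapp]
      calc |B x y| ≤ Real.sqrt (B x x) * Real.sqrt (B y y) := habsCS x y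
        _ ≤ Real.sqrt (B x x) * (Real.sqrt C1 * ‖y‖) :=
            mul_le_mul_of_nonneg_left (hup y) (Real.sqrt_nonneg _)
        _ = Real.sqrt C1 * Real.sqrt (B x x) * ‖y‖ := by ring
    set K : ℝ := M * Real.sqrt C1 + 1 with hK
    have hKpos : 0 < K := by
      have : 0 ≤ M * Real.sqrt C1 := mul_nonneg hMnonneg (Real.sqrt_nonneg _)
      rw [hK]; linarith
    have hC1s : 0 < Real.sqrt C1 := Real.sqrt_pos.2 hC1pos
    have hlow2 : ∀ x : E, ‖x‖ ≤ K * Real.sqrt (B x x) := by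
      intro x
      calc ‖x‖ ≤ M * ‖Φ x‖ := hlow x
        _ ≤ M * (Real.sqrt C1 * Real.sqrt (B x x)) :=
            mul_le_mul_of_nonneg_left (hΦnorm x) hMnonneg
        _ ≤ K * Real.sqrt (B x x) := by
            have := Real.sqrt_nonneg (B x x)
            rw [hK]; nlinarith
    refine ⟨B, hsymmB, hpos, ⟨K⁻¹, Real.sqrt C1, inv_pos.2 hKpos, hC1s, fun x => ?_⟩,
      fun T x y => hadjB T x y⟩
    constructor
    · have := hlow2 x
      rw [inv_mul_le_iff₀ hKpos]
      exact this
    · exact hup x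
end
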